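/- Let α > 0 be real, n ≥ 3 an integer, and consider the congestion game Γ_{Ψ(α,n,p)} corresponding to the malicious Bayesian congestion game Ψ(α,n,p) (the congestion game does not depend on p). Then every pure strategy profile s satisfies SC(Γ_{Ψ(α,n,p)}, s) ≥ 1 + α, and the profile in which every player u plays s_u^1 has social cost exactly 1 + α; hence Opt(Γ_{Ψ(α,n,p)}) = 1 + α. -/
import Mathlib


open Finset

/-- The data of a malicious Bayesian congestion game: strategy sets (sets of
nonempty subsets of resources), type probabilities, latency functions. -/
structure Game (N E : Type) where
  S : N → Finset (Finset E)
  p : N → ℝ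
  f : E → ℝ → ℝ

namespace Game

variable {N E : Type} [Fintype N] [DecidableEq N] [Fintype E] [DecidableEq E]

/-- A pure strategy profile: each player chooses a pair (selfish strategy, malicious strategy). -/
abbrev Profile (N E : Type) := N → Finset E × Finset E

/-- Validity: both type-agents of each player choose strategies from the player's strategy set. -/
def Valid (G : Game N E) (σ : Profile N E) : Prop :=
  ∀ u, (σ u).1 ∈ G.S u ∧ (σ u).2 ∈ G.S u

/-- Expected selfish load on resource `e`, with player `u` omitted. -/
noncomputable def selfLoadEx (G : Game N E) (σ : Profile N E) (u : N) (e : E) : ℝ :=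
  ∑ v ∈ Finset.univ.erase u, if e ∈ (σ v).1 then 1 - G.p v else 0

/-- Expected malicious load on resource `e`, with player `u` omitted. -/
noncomputable def malLoadEx (G : Game N E) (σ : Profile N E) (u : N) (e : E) : ℝ :=
  ∑ v ∈ Finset.univ.erase u, if e ∈ (σ v).2 then G.p v else 0

/-- Private (expected) cost of player `u` in the pure profile `σ`. -/
noncomputable def PC (G : Game N E) (σ : Profile N E) (u : N) : ℝ :=
  ∑ e ∈ (σ u).1, G.f e (G.selfLoadEx σ u e + G.malLoadEx σ u e + 1)

/-- Social cost of a pure profile: weighted average latency of the selfish type-agents. -/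
noncomputable def SC (G : Game N E) (σ : Profile N E) : ℝ :=
  (∑ u, (1 - G.p u) * G.PC σ u) / ((Fintype.card N : ℝ) - ∑ u, G.p u)

/-- Replace the selfish strategy of player `u` by `t`. -/
def updS (σ : Profile N E) (u : N) (t : Finset E) : Profile N E :=
  Function.update σ u (t, (σ u).2)

/-- Replace the malicious strategy of player `u` by `t`. -/
def updM (σ : Profile N E) (u : N) (t : Finset E) : Profile N E :=
  Function.update σ u ((σ u).1, t)

/-- Pure Bayesian Nash equilibrium: no selfish type-agent can decrease its private cost and
no malicious type-agent can increase the social cost by a unilateral deviation. -/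
def IsPureBNE (G : Game N E) (σ : Profile N E) : Prop :=
  G.Valid σ ∧ ∀ u : N, ∀ t ∈ G.S u,
    G.PC σ u ≤ G.PC (updS σ u t) u ∧ G.SC (updM σ u t) ≤ G.SC σ

end Game
namespace Game

variable {N E : Type} [Fintype N] [DecidableEq N] [Fintype E] [DecidableEq E]

/-- A pure strategy profile of the corresponding (non-malicious) congestion game `Γ_Ψ`. -/
abbrev CProfile (N E : Type) := N → Finset E

/-- Validity for congestion-game profiles. -/
def CValid (G : Game N E) (s : CProfile N E) : Prop := ∀ u, s u ∈ G.S u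

/-- Load (number of players) on resource `e`. -/
def load (s : CProfile N E) (e : E) : ℕ := (Finset.univ.filter fun u => e ∈ s u).card

/-- Private cost of player `u` in the congestion game `Γ_Ψ`. -/
noncomputable def CPC (G : Game N E) (s : CProfile N E) (u : N) : ℝ :=
  ∑ e ∈ s u, G.f e (load s e)

/-- Social cost (average latency) in the congestion game `Γ_Ψ`. -/
noncomputable def CSC (G : Game N E) (s : CProfile N E) : ℝ :=
  (∑ e, (load s e : ℝ) * G.f e (load s e)) / (Fintype.card N : ℝ)

/-- Optimum social cost of the congestion game `Γ_Ψ`. -/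
noncomputable def COpt (G : Game N E) : ℝ :=
  sInf {x | ∃ s : CProfile N E, G.CValid s ∧ G.CSC s = x}

/-- Pure Nash equilibrium of the congestion game `Γ_Ψ`. -/
def IsPureNE (G : Game N E) (s : CProfile N E) : Prop :=
  G.CValid s ∧ ∀ u : N, ∀ t ∈ G.S u, G.CPC s u ≤ G.CPC (Function.update s u t) u

end Game
/-- Resources of the example game `Ψ(α,n,p)`: `g_1,…,g_n` and `h_1,…,h_n`
(indices modulo `n`). -/
inductive ResEx (n : ℕ) where
  | g (i : Fin n)
  | h (i : Fin n)
deriving DecidableEq, Fintype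

/-- The strategy `s_u^1 = {g_u, h_u}`. -/
def exS1 {n : ℕ} (u : Fin n) : Finset (ResEx n) := {ResEx.g u, ResEx.h u}

/-- The strategy `s_u^2 = {g_{u+1}, h_{u+1}, h_{u+2}}` (indices modulo `n`). -/
def exS2 {n : ℕ} [NeZero n] (u : Fin n) : Finset (ResEx n) :=
  {ResEx.g (u + 1), ResEx.h (u + 1), ResEx.h (u + 2)}

/-- The strategy `s_u^3 = E`. -/
def exS3 (n : ℕ) : Finset (ResEx n) := Finset.univ

/-- The example game `Ψ(α,n,p)`: `n` players, resources `g_i` with latency `α·x` and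
`h_i` with latency `x`, strategy sets `{s_u^1, s_u^2, s_u^3}` and identical type
probability `p`. -/
noncomputable def ExGame (n : ℕ) [NeZero n] (α p : ℝ) : Game (Fin n) (ResEx n) where
  S := fun u => {exS1 u, exS2 u, exS3 n}
  p := fun _ => p
  f := fun e x => match e with
    | .g _ => α * x
    | .h _ => x


section Aux

variable {n : ℕ} [NeZero n]

def resEquiv (n : ℕ) : ResEx n ≃ (Fin n ⊕ Fin n) where
  toFun e := match e with | .g i => .inl i | .h i => .inr i
  invFun x := match x with | .inl i => .g i | .inr i => .h i
  left_inv e := by cases e <;> rfl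
  right_inv x := by cases x <;> rfl

lemma sum_resEx (F : ResEx n → ℝ) :
    ∑ e, F e = (∑ i, F (ResEx.g i)) + (∑ i, F (ResEx.h i)) := by
  rw [← Equiv.sum_comp (resEquiv n).symm F, Fintype.sum_sum_type]
  rfl

lemma load_eq_sum (s : Game.CProfile (Fin n) (ResEx n)) (e : ResEx n) :
    Game.load s e = ∑ u, if e ∈ s u then 1 else 0 :=
  Finset.card_filter _ _

lemma exists_g_mem (s : Game.CProfile (Fin n) (ResEx n))
    (hs : (ExGame n α₀ p₀).CValid s) (u : Fin n) : ∃ i, ResEx.g i ∈ s u := by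
  have h := hs u
  simp only [ExGame, Finset.mem_insert, Finset.mem_singleton] at h
  rcases h with h | h | h <;> rw [h]
  · exact ⟨u, by simp [exS1]⟩
  · exact ⟨u + 1, by simp [exS2]⟩
  · exact ⟨u, by simp [exS3]⟩

lemma exists_h_mem (s : Game.CProfile (Fin n) (ResEx n))
    (hs : (ExGame n α₀ p₀).CValid s) (u : Fin n) : ∃ i, ResEx.h i ∈ s u := by
  have h := hs u
  simp only [ExGame, Finset.mem_insert, Finset.mem_singleton] at h
  rcases h with h | h | h <;> rw [h]
  · exact ⟨u, by simp [exS1]⟩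
  · exact ⟨u + 1, by simp [exS2]⟩
  · exact ⟨u, by simp [exS3]⟩

lemma sum_load_ge (F : Fin n → ResEx n) (s : Game.CProfile (Fin n) (ResEx n))
    (hex : ∀ u : Fin n, ∃ i, F i ∈ s u) :
    n ≤ ∑ i, Game.load s (F i) := by
  have : ∑ i, Game.load s (F i) = ∑ u : Fin n, ∑ i, if F i ∈ s u then 1 else 0 := by
    simp only [load_eq_sum]; exact Finset.sum_comm
  rw [this]
  calc n = ∑ _u : Fin n, 1 := by simp
    _ ≤ _ := Finset.sum_le_sum fun u _ => by
        obtain ⟨i, hi⟩ := hex u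
        calc (1:ℕ) = if F i ∈ s u then 1 else 0 := by simp [hi]
          _ ≤ _ := Finset.single_le_sum (f := fun j => if F j ∈ s u then 1 else 0)
              (fun j _ => Nat.zero_le _) (Finset.mem_univ i)

end Aux

/- The congestion game `Γ_{Ψ(α,n,p)}` does not depend on the type probability `p`,
so we use `ExGame n α 0` to represent it. -/
theorem exGame_congestion_optimum (α : ℝ) (hα : 0 < α) (n : ℕ) [NeZero n] (hn : 3 ≤ n) :
    (∀ s : Game.CProfile (Fin n) (ResEx n),
      (ExGame n α 0).CValid s → 1 + α ≤ (ExGame n α 0).CSC s) ∧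
    (ExGame n α 0).CSC (fun u => exS1 u) = 1 + α ∧
    (ExGame n α 0).COpt = 1 + α := by
  have hn0 : (0:ℝ) < n := by positivity
  have hsq : ∀ m : ℕ, (m:ℝ) ≤ (m:ℝ) * (m:ℝ) := by
    intro m
    rcases Nat.eq_zero_or_pos m with h | h
    · simp [h]
    · have : (1:ℝ) ≤ m := by exact_mod_cast h
      nlinarith
  have hCSC : ∀ s : Game.CProfile (Fin n) (ResEx n), (ExGame n α 0).CSC s =
      ((∑ i, α * ((Game.load s (ResEx.g i) : ℝ) * (Game.load s (ResEx.g i) : ℝ))) +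
       ∑ i, (Game.load s (ResEx.h i) : ℝ) * (Game.load s (ResEx.h i) : ℝ)) / n := by
    intro s
    unfold Game.CSC
    rw [sum_resEx, Fintype.card_fin]
    congr 1
    congr 1 <;> exact Finset.sum_congr rfl fun i _ => by simp only [ExGame]; ring
  have hmain : ∀ s : Game.CProfile (Fin n) (ResEx n),
      (ExGame n α 0).CValid s → 1 + α ≤ (ExGame n α 0).CSC s := by
    intro s hs
    have hg : (n:ℝ) ≤ ∑ i, (Game.load s (ResEx.g i) : ℝ) := by
      have := sum_load_ge (F := ResEx.g) s (exists_g_mem (α₀ := α) (p₀ := 0) s hs)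
      exact_mod_cast this
    have hh : (n:ℝ) ≤ ∑ i, (Game.load s (ResEx.h i) : ℝ) := by
      have := sum_load_ge (F := ResEx.h) s (exists_h_mem (α₀ := α) (p₀ := 0) s hs)
      exact_mod_cast this
    rw [hCSC, le_div_iff₀ hn0]
    have h1 : (n:ℝ) ≤ ∑ i, (Game.load s (ResEx.g i) : ℝ) * (Game.load s (ResEx.g i) : ℝ) :=
      hg.trans (Finset.sum_le_sum fun i _ => hsq _)
    have h2 : (n:ℝ) ≤ ∑ i, (Game.load s (ResEx.h i) : ℝ) * (Game.load s (ResEx.h i) : ℝ) :=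
      hh.trans (Finset.sum_le_sum fun i _ => hsq _)
    have h3 : α * (n:ℝ) ≤ ∑ i, α * ((Game.load s (ResEx.g i) : ℝ) * (Game.load s (ResEx.g i) : ℝ)) := by
      rw [← Finset.mul_sum]
      exact mul_le_mul_of_nonneg_left h1 hα.le
    nlinarith
  have hload1 : ∀ e : ResEx n, Game.load (fun u => exS1 u) e = 1 := by
    intro e
    unfold Game.load
    cases e with
    | g i =>
        have : (Finset.univ.filter fun u : Fin n => ResEx.g i ∈ exS1 u) = {i} := by
          ext u; simp [exS1, eq_comm]
        rw [this, Finset.card_singleton]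
    | h i =>
        have : (Finset.univ.filter fun u : Fin n => ResEx.h i ∈ exS1 u) = {i} := by
          ext u; simp [exS1, eq_comm]
        rw [this, Finset.card_singleton]
  have heq : (ExGame n α 0).CSC (fun u => exS1 u) = 1 + α := by
    rw [hCSC]
    simp only [hload1]
    rw [Finset.sum_const, Finset.sum_const]
    simp only [Finset.card_univ, Fintype.card_fin, nsmul_eq_mul, Nat.cast_one]
    field_simp
    ring
  refine ⟨hmain, heq, ?_⟩
  have hvalid : (ExGame n α 0).CValid (fun u => exS1 u) := by
    intro u
    simp [ExGame]
  apply le_antisymm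
  · exact csInf_le ⟨1 + α, fun x ⟨s, hs, hx⟩ => hx ▸ hmain s hs⟩ ⟨fun u => exS1 u, hvalid, heq⟩
  · exact le_csInf ⟨1 + α, fun u => exS1 u, hvalid, heq⟩ (fun x ⟨s, hs, hx⟩ => hx ▸ hmain s hs)
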